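/- arXiv:nlin/0612065 — 5 statements merged into one kernel-verified Lean document; each statement's English description precedes it below -/
import Mathlib

section
/- Fix g ≥ 1 and distinct nonzero real numbers β₁ < ... < β_K < 0 < β_{K+1} < ... < β_g. Let A be the g×g matrix whose k-th column equals ε_k N_k, where N^j_k = 2πi β_k^{g-j} / (√(β_k²+1) ∏_{ℓ≠k}(β_k − β_ℓ)) and ε_k = +1 for k ≤ K, ε_k = −1 for k > K. Then A is invertible and the first column of 4πi · A^{-1} has j-th entry V_j = ε_j · 2√(β_j² + 1). -/
open Complex Matrix Finset

/-!
Write `A = N * diagonal c` with `N j k = β_k ^ (g-1-j)` and `c k = 2πi ε_k / D_k`. The first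
column of `N⁻¹` is `(∏_{l ≠ k} (β_k - β_l))⁻¹`: by Lagrange interpolation of `X ^ m` at the
nodes `β`, the sum `∑_k β_k ^ m / ∏_{l ≠ k} (β_k - β_l)` is the coefficient of `X ^ (g-1)` in
`X ^ m`. Hence `4πi A⁻¹ k 0 = 2 D_k / (ε_k ∏_{l ≠ k} (β_k - β_l)) = 2 ε_k √(β_k² + 1)`, as
`ε_k² = 1`.
-/

namespace Lagrange

variable {F ι : Type*} [Field F] [DecidableEq ι]

theorem sum_pow_div_prod_sub {s : Finset ι} {v : ι → F} (hvs : Set.InjOn v s) {m : ℕ}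
    (hm : m < #s) :
    ∑ i ∈ s, v i ^ m / ∏ j ∈ s.erase i, (v i - v j) = if m = #s - 1 then 1 else 0 := by
  have hdeg : (Polynomial.X ^ m : Polynomial F).degree < #s := by
    rw [Polynomial.degree_X_pow]; exact_mod_cast hm
  have key := coeff_eq_sum hvs hdeg
  simp only [Polynomial.eval_pow, Polynomial.eval_X, Polynomial.coeff_X_pow] at key
  exact key.symm.trans (if_congr eq_comm rfl rfl)

end Lagrange

namespace Matrix

variable {R : Type*} [CommRing R] {n : ℕ}

def descVandermonde (v : Fin n → R) : Matrix (Fin n) (Fin n) R :=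
  of fun j k => v k ^ (n - 1 - (j : ℕ))

theorem descVandermonde_eq_submatrix (v : Fin n → R) :
    descVandermonde v = (vandermonde v)ᵀ.submatrix Fin.revPerm id := by
  ext j k
  simp only [descVandermonde, of_apply, submatrix_apply, transpose_apply, vandermonde_apply,
    Fin.revPerm_apply, Fin.val_rev, id]
  congr 1
  omega

theorem det_descVandermonde_ne_zero [IsDomain R] {v : Fin n → R} (hv : Function.Injective v) :
    (descVandermonde v).det ≠ 0 := by
  rw [descVandermonde_eq_submatrix, det_permute, det_transpose]
  exact mul_ne_zero ((Units.isUnit _).map (Int.castRingHom R)).ne_zero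
    (det_vandermonde_ne_zero_iff.mpr hv)

variable {F : Type*} [Field F] {v : Fin n → F}

theorem descVandermonde_mulVec_inv_prod_sub (hv : Function.Injective v) {i : Fin n}
    (hi : (i : ℕ) = 0) :
    descVandermonde v *ᵥ (fun k => (∏ l ∈ univ.erase k, (v k - v l))⁻¹) = Pi.single i 1 := by
  ext j
  have hcard : #(univ : Finset (Fin n)) = n := card_fin n
  have key := Lagrange.sum_pow_div_prod_sub hv.injOn (s := univ) (m := n - 1 - (j : ℕ))
    (by omega)
  simp only [mulVec, dotProduct, descVandermonde, of_apply, ← div_eq_mul_inv, key, hcard]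
  rw [Pi.single_apply]
  exact if_congr (by rw [Fin.ext_iff]; omega) rfl rfl

theorem isUnit_descVandermonde_mul_diagonal (hv : Function.Injective v) {c : Fin n → F}
    (hc : ∀ k, c k ≠ 0) : IsUnit (descVandermonde v * diagonal c) := by
  rw [isUnit_iff_isUnit_det, det_mul, det_diagonal, isUnit_iff_ne_zero]
  exact mul_ne_zero (det_descVandermonde_ne_zero hv) (prod_ne_zero_iff.mpr fun k _ => hc k)

theorem inv_descVandermonde_mul_diagonal_apply (hv : Function.Injective v) {c : Fin n → F}
    (hc : ∀ k, c k ≠ 0) {i : Fin n} (hi : (i : ℕ) = 0) (j : Fin n) :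
    (descVandermonde v * diagonal c)⁻¹ j i = (c j * ∏ l ∈ univ.erase j, (v j - v l))⁻¹ := by
  have := (isUnit_descVandermonde_mul_diagonal hv hc).invertible
  have hsol : Pi.single i 1 = (descVandermonde v * diagonal c) *ᵥ
      fun k => (c k * ∏ l ∈ univ.erase k, (v k - v l))⁻¹ := by
    rw [← mulVec_mulVec, ← descVandermonde_mulVec_inv_prod_sub hv hi]
    congr 1
    ext k
    rw [mulVec_diagonal, mul_inv, ← mul_assoc, mul_inv_cancel₀ (hc k), one_mul]
  simpa only [mulVec_single_one, col_apply] using congrFun (inv_mulVec_eq_vec hsol) j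

end Matrix

theorem stmt3_general (g K : ℕ) (hg : 1 ≤ g) (β : Fin g → ℝ)
    (hmono : StrictMono β)
    (ε : Fin g → ℝ) (hε : ∀ k : Fin g, ε k = if (k : ℕ) < K then 1 else -1)
    (D : Fin g → ℝ)
    (hD : ∀ k, D k = Real.sqrt ((β k) ^ 2 + 1) * ∏ l ∈ Finset.univ.erase k, (β k - β l))
    (A : Matrix (Fin g) (Fin g) ℂ)
    (hA : ∀ j k, A j k =
      (ε k : ℂ) * (2 * (Real.pi : ℂ) * Complex.I * ((β k : ℂ) ^ (g - 1 - (j : ℕ))) / (D k : ℂ))) :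
    IsUnit A ∧
      ∀ j : Fin g, 4 * (Real.pi : ℂ) * Complex.I * (A⁻¹ j ⟨0, hg⟩) =
        ((ε j * (2 * Real.sqrt ((β j) ^ 2 + 1)) : ℝ) : ℂ) := by
  set v : Fin g → ℂ := fun k => (β k : ℂ)
  set c : Fin g → ℂ := fun k => ε k * (2 * Real.pi * I) / D k
  have hv : Function.Injective v := ofReal_injective.comp hmono.injective
  have hA' : A = descVandermonde v * diagonal c := by
    ext j k
    simp only [hA, mul_apply, descVandermonde, of_apply, diagonal_apply, mul_ite, mul_zero,
      sum_ite_eq', mem_univ, if_true, v, c]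
    ring
  have hε_sq (k : Fin g) : (ε k : ℂ) ^ 2 = 1 := by rw [hε k]; split_ifs <;> norm_num
  have hε_ne (k : Fin g) : (ε k : ℂ) ≠ 0 := fun h => by simpa [h] using hε_sq k
  have hsqrt_ne (k : Fin g) : (Real.sqrt ((β k) ^ 2 + 1) : ℂ) ≠ 0 :=
    ofReal_ne_zero.mpr (by positivity)
  have hprod_ne (k : Fin g) : ∏ l ∈ univ.erase k, (v k - v l) ≠ 0 :=
    prod_ne_zero_iff.mpr fun l hl => sub_ne_zero.mpr (hv.ne (ne_of_mem_erase hl).symm)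
  have hD' (k : Fin g) :
      (D k : ℂ) = Real.sqrt ((β k) ^ 2 + 1) * ∏ l ∈ univ.erase k, (v k - v l) := by
    simp only [hD, v]; push_cast; rfl
  have hπI : 2 * (Real.pi : ℂ) * I ≠ 0 := by simp [Real.pi_ne_zero, I_ne_zero]
  have hc (k : Fin g) : c k ≠ 0 := by
    simp only [c, hD']
    exact div_ne_zero (mul_ne_zero (hε_ne k) hπI) (mul_ne_zero (hsqrt_ne k) (hprod_ne k))
  subst hA'
  refine ⟨isUnit_descVandermonde_mul_diagonal hv hc, fun j => ?_⟩
  rw [inv_descVandermonde_mul_diagonal_apply hv hc rfl]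
  simp only [c, hD']
  push_cast
  field_simp [hε_ne j, hsqrt_ne j, hprod_ne j, hπI]
  rw [hε_sq j]
  norm_num

/-- Frequency computation with double points on both sides of the origin: with signs
`ε_k = +1` for `k ≤ K` (where `β_k < 0`) and `ε_k = -1` for `k > K`, the matrix `A` with
`k`-th column `ε_k N_k` is invertible and the first column of `4πi A⁻¹` has `j`-th entry
`V_j = ε_j · 2√(β_j²+1)`. -/
theorem stmt3 (g K : ℕ) (hg : 1 ≤ g) (β : Fin g → ℝ)
    (hmono : StrictMono β) (hne : ∀ k, β k ≠ 0)
    (hK : ∀ k : Fin g, ((k : ℕ) < K ↔ β k < 0))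
    (ε : Fin g → ℝ) (hε : ∀ k : Fin g, ε k = if (k : ℕ) < K then 1 else -1)
    (D : Fin g → ℝ)
    (hD : ∀ k, D k = Real.sqrt ((β k) ^ 2 + 1) * ∏ l ∈ Finset.univ.erase k, (β k - β l))
    (A : Matrix (Fin g) (Fin g) ℂ)
    (hA : ∀ j k, A j k =
      (ε k : ℂ) * (2 * (Real.pi : ℂ) * Complex.I * ((β k : ℂ) ^ (g - 1 - (j : ℕ))) / (D k : ℂ))) :
    IsUnit A ∧
      ∀ j : Fin g, 4 * (Real.pi : ℂ) * Complex.I * (A⁻¹ j ⟨0, hg⟩) =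
        ((ε j * (2 * Real.sqrt ((β j) ^ 2 + 1)) : ℝ) : ℂ) :=
  stmt3_general g K hg β hmono ε hε D hD A hA
end

section
/- Let λ ∈ ℝ, k = √(λ²+1) > 0, c ∈ ℂ \ {0}, and u(x) = c·exp(2ikx + 4ikλt) for a fixed t. With ψ₁, ψ₂ the plane-wave Baker eigenfunctions as above, set F(x) = c ψ₁(x,t)² + c̄ · conj(ψ₂(x,t))². Then F(x) = e^{2it} (u + ū (k+λ)²)/(k+λ+1)², F never vanishes, and Im( F'(x)/F(x) ) = −4kλ|c|² (k+λ)(1+(k+λ)²) / |u + (k+λ)² ū|². -/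
/-!
For real `θ`, conjugation inverts `exp (θ * I)`, so `c ψ₁²` and `c̄ (ψ̄₂)²` are `u` and
`(k+λ)² ū` times the common factor `A = e^{2it}/(k+λ+1)²`. Since `u' = 2ik u`, with
`m = (k+λ)²` we get `F'/F = 2ik (u - m ū)/(u + m ū)`, whose imaginary part is
`2k (1 - m²) |u|² / |u + m ū|²`; and `1 - (k+λ)² = -2λ(k+λ)` because `k² = 1 + λ²`.
-/

open Complex ComplexConjugate

theorem conj_exp_ofReal_mul_I (θ : ℝ) : conj (exp (θ * I)) = (exp (θ * I))⁻¹ := by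
  rw [← exp_conj, ← exp_neg, map_mul, conj_ofReal, conj_I, mul_neg]

theorem im_mul_I_mul_sub_conj_div_add_conj (w : ℂ) (a m : ℝ) :
    ((a * I * (w - m * conj w)) / (w + m * conj w)).im
      = a * (1 - m ^ 2) * normSq w / normSq (w + m * conj w) := by
  rw [div_im, ← sub_div]
  congr 1
  simp only [normSq_apply, mul_re, mul_im, add_re, add_im, sub_re, sub_im, ofReal_re,
    ofReal_im, I_re, I_im, conj_re, conj_im]
  ring

theorem HasDerivAt.add_mul_conj {u : ℝ → ℂ} {x a : ℝ} (m : ℝ)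
    (hu : HasDerivAt u (a * I * u x) x) :
    HasDerivAt (fun y ↦ u y + m * conj (u y)) (a * I * (u x - m * conj (u x))) x := by
  refine (hu.add (hu.star.const_mul (m : ℂ))).congr_deriv ?_
  simp only [star_mul', Complex.star_def, conj_ofReal, conj_I]
  ring

section PlaneWave

variable {u : ℝ → ℂ} {c : ℂ} {ω φ : ℝ}

theorem norm_planeWave (hu : ∀ y, u y = c * exp ((ω * y + φ) * I)) (y : ℝ) :
    ‖u y‖ = ‖c‖ := by
  rw [hu, norm_mul, ← ofReal_mul, ← ofReal_add, norm_exp_ofReal_mul_I, mul_one]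

theorem hasDerivAt_planeWave (hu : ∀ y, u y = c * exp ((ω * y + φ) * I)) (x : ℝ) :
    HasDerivAt u (ω * I * u x) x := by
  have hphase : HasDerivAt (fun y : ℝ ↦ ((ω : ℂ) * y + φ) * I) (ω * I) x := by
    simpa using
      (((hasDerivAt_id x).ofReal_comp.const_mul (ω : ℂ)).add_const (φ : ℂ)).mul_const I
  have h := hphase.cexp.const_mul c
  rw [← funext hu] at h
  exact h.congr_deriv (by rw [hu]; ring)

end PlaneWave

theorem mul_sq_add_conj_mul_conj_sq (c : ℂ) (θ s m d : ℝ) :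
    c * (exp (I * (θ + s)) / d) ^ 2 + conj c * conj (m * exp (I * (θ - s)) / d) ^ 2
      = exp (2 * I * s) * (c * exp (2 * I * θ) + conj (c * exp (2 * I * θ)) * m ^ 2)
          / d ^ 2 := by
  have hadd : exp (I * (θ + s)) = exp (θ * I) * exp (s * I) := by rw [← exp_add]; ring_nf
  have hsub : exp (I * (θ - s)) = exp (θ * I) / exp (s * I) := by rw [← exp_sub]; ring_nf
  have hθ : exp (2 * I * θ) = exp (θ * I) ^ 2 := by rw [← exp_nat_mul]; push_cast; ring_nf
  have hs : exp (2 * I * s) = exp (s * I) ^ 2 := by rw [← exp_nat_mul]; push_cast; ring_nf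
  simp only [hadd, hsub, hθ, hs, map_div₀, map_mul, map_pow, conj_ofReal, conj_exp_ofReal_mul_I]
  have := exp_ne_zero (θ * I)
  have := exp_ne_zero (s * I)
  field_simp

theorem stmt9_general (lam : ℝ) (k : ℝ) (hk : k = Real.sqrt (lam ^ 2 + 1))
    (c : ℂ) (t : ℝ)
    (ψ₁ ψ₂ : ℝ → ℝ → ℂ)
    (hψ₁ : ∀ x t, ψ₁ x t =
      Complex.exp (Complex.I * ((k : ℂ) * x + 2 * (k : ℂ) * (lam : ℂ) * t + t))
        / ((k : ℂ) + (lam : ℂ) + 1))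
    (hψ₂ : ∀ x t, ψ₂ x t = ((k : ℂ) + (lam : ℂ)) *
      Complex.exp (Complex.I * ((k : ℂ) * x + 2 * (k : ℂ) * (lam : ℂ) * t - t))
        / ((k : ℂ) + (lam : ℂ) + 1))
    (u : ℝ → ℂ)
    (hu : ∀ x, u x = c * Complex.exp (2 * Complex.I * (k : ℂ) * x
      + 4 * Complex.I * (k : ℂ) * (lam : ℂ) * t))
    (hne : ∀ x, u x + ((k : ℂ) + (lam : ℂ)) ^ 2 * (starRingEnd ℂ) (u x) ≠ 0)
    (F : ℝ → ℂ)
    (hF : ∀ x, F x = c * (ψ₁ x t) ^ 2 + (starRingEnd ℂ) c * ((starRingEnd ℂ) (ψ₂ x t)) ^ 2) :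
    ∀ x,
      F x = Complex.exp (2 * Complex.I * (t : ℂ)) *
          (u x + (starRingEnd ℂ) (u x) * ((k : ℂ) + (lam : ℂ)) ^ 2)
          / ((k : ℂ) + (lam : ℂ) + 1) ^ 2
      ∧ F x ≠ 0
      ∧ (deriv F x / F x).im =
          -4 * k * lam * (‖c‖) ^ 2 * (k + lam) * (1 + (k + lam) ^ 2)
            / (‖(u x + ((k : ℂ) + (lam : ℂ)) ^ 2 * (starRingEnd ℂ) (u x))‖) ^ 2 := by
  have hk0 : 0 ≤ k := hk ▸ Real.sqrt_nonneg _
  have hk2 : k ^ 2 = lam ^ 2 + 1 := by rw [hk]; exact Real.sq_sqrt (by positivity)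
  have hkl : 0 < k + lam := by nlinarith
  have hform : ∀ x, F x = exp (2 * I * t) * (u x + conj (u x) * ((k : ℂ) + lam) ^ 2)
      / ((k : ℂ) + lam + 1) ^ 2 := by
    intro x
    have h := mul_sq_add_conj_mul_conj_sq c (k * x + 2 * k * lam * t) t (k + lam) (k + lam + 1)
    push_cast at h
    rwa [hF, hψ₁, hψ₂, hu,
      show 2 * I * k * x + 4 * I * k * lam * t = 2 * I * (k * x + 2 * k * lam * t) by ring]
  set A := exp (2 * I * t) / ((k : ℂ) + lam + 1) ^ 2
  set m : ℝ := (k + lam) ^ 2 with hm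
  have hA : A ≠ 0 := div_ne_zero (exp_ne_zero _)
    (pow_ne_zero _ (by exact_mod_cast (by positivity : (k + lam + 1 : ℝ) ≠ 0)))
  have hF' : F = fun y ↦ A * (u y + m * conj (u y)) := by
    funext y; rw [hform, hm]; push_cast; ring
  have hu' (y : ℝ) : u y = c * exp (((2 * k : ℝ) * y + (4 * k * lam * t : ℝ)) * I) := by
    rw [hu]; push_cast; ring_nf
  intro x
  have hne' : u x + m * conj (u x) ≠ 0 := by rw [hm]; push_cast; exact hne x
  refine ⟨hform x, by rw [hF']; exact mul_ne_zero hA hne', ?_⟩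
  have hderiv : HasDerivAt F (A * ((2 * k : ℝ) * I * (u x - m * conj (u x)))) x := by
    rw [hF']; exact ((hasDerivAt_planeWave hu' x).add_mul_conj m).const_mul A
  rw [hderiv.deriv, hF', mul_div_mul_left _ _ hA, im_mul_I_mul_sub_conj_div_add_conj,
    normSq_eq_norm_sq, normSq_eq_norm_sq, norm_planeWave hu' x, hm]
  push_cast
  congr 1
  linear_combination (-2 * k * (1 + (k + lam) ^ 2) * ‖c‖ ^ 2) * hk2

/-- For the plane-wave squared eigenfunction combination
`F = c ψ₁² + c̄ (ψ̄₂)²` with `u(x) = c e^{2ikx+4ikλt}`, one has the closed form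
`F = e^{2it}(u + ū(k+λ)²)/(k+λ+1)²`, `F` never vanishes, and
`Im(F'/F) = −4kλ|c|²(k+λ)(1+(k+λ)²)/|u+(k+λ)²ū|²`. -/
theorem stmt9 (lam : ℝ) (k : ℝ) (hk : k = Real.sqrt (lam ^ 2 + 1))
    (c : ℂ) (hc : c ≠ 0) (t : ℝ)
    (ψ₁ ψ₂ : ℝ → ℝ → ℂ)
    (hψ₁ : ∀ x t, ψ₁ x t =
      Complex.exp (Complex.I * ((k : ℂ) * x + 2 * (k : ℂ) * (lam : ℂ) * t + t))
        / ((k : ℂ) + (lam : ℂ) + 1))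
    (hψ₂ : ∀ x t, ψ₂ x t = ((k : ℂ) + (lam : ℂ)) *
      Complex.exp (Complex.I * ((k : ℂ) * x + 2 * (k : ℂ) * (lam : ℂ) * t - t))
        / ((k : ℂ) + (lam : ℂ) + 1))
    (u : ℝ → ℂ)
    (hu : ∀ x, u x = c * Complex.exp (2 * Complex.I * (k : ℂ) * x
      + 4 * Complex.I * (k : ℂ) * (lam : ℂ) * t))
    (hne : ∀ x, u x + ((k : ℂ) + (lam : ℂ)) ^ 2 * (starRingEnd ℂ) (u x) ≠ 0)
    (F : ℝ → ℂ)
    (hF : ∀ x, F x = c * (ψ₁ x t) ^ 2 + (starRingEnd ℂ) c * ((starRingEnd ℂ) (ψ₂ x t)) ^ 2) :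
    ∀ x,
      F x = Complex.exp (2 * Complex.I * (t : ℂ)) *
          (u x + (starRingEnd ℂ) (u x) * ((k : ℂ) + (lam : ℂ)) ^ 2)
          / ((k : ℂ) + (lam : ℂ) + 1) ^ 2
      ∧ F x ≠ 0
      ∧ (deriv F x / F x).im =
          -4 * k * lam * (‖c‖) ^ 2 * (k + lam) * (1 + (k + lam) ^ 2)
            / (‖(u x + ((k : ℂ) + (lam : ℂ)) ^ 2 * (starRingEnd ℂ) (u x))‖) ^ 2 :=
  stmt9_general lam k hk c t ψ₁ ψ₂ hψ₁ hψ₂ u hu hne F hF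
end

section
/- For real λ ≠ 0 with k = √(λ²+1), the sign of Im d/dx log( c ψ₁² + c̄ ψ̄₂² ) for the plane-wave squared eigenfunctions is constant in x and equals −sign(λ): it is strictly negative when λ > 0 and strictly positive when λ < 0. -/
open Complex

/-- For real `λ ≠ 0`, the sign of `Im d/dx log(c ψ₁² + c̄ ψ̄₂²)` for the plane-wave
squared eigenfunctions is constant in `x` and equals `−sign(λ)`: strictly negative for
`λ > 0` and strictly positive for `λ < 0`. -/
theorem stmt10 (lam : ℝ) (hlam : lam ≠ 0) (k : ℝ) (hk : k = Real.sqrt (lam ^ 2 + 1))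
    (c : ℂ) (hc : c ≠ 0) (t : ℝ)
    (ψ₁ ψ₂ : ℝ → ℝ → ℂ)
    (hψ₁ : ∀ x t, ψ₁ x t =
      Complex.exp (Complex.I * ((k : ℂ) * x + 2 * (k : ℂ) * (lam : ℂ) * t + t))
        / ((k : ℂ) + (lam : ℂ) + 1))
    (hψ₂ : ∀ x t, ψ₂ x t = ((k : ℂ) + (lam : ℂ)) *
      Complex.exp (Complex.I * ((k : ℂ) * x + 2 * (k : ℂ) * (lam : ℂ) * t - t))
        / ((k : ℂ) + (lam : ℂ) + 1))
    (F : ℝ → ℂ)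
    (hF : ∀ x, F x = c * (ψ₁ x t) ^ 2 + (starRingEnd ℂ) c * ((starRingEnd ℂ) (ψ₂ x t)) ^ 2) :
    ∀ x, (0 < lam → (deriv F x / F x).im < 0) ∧ (lam < 0 → 0 < (deriv F x / F x).im) := by
  have hk2 : k ^ 2 = lam ^ 2 + 1 := by
    rw [hk]; exact Real.sq_sqrt (by positivity)
  have hkpos : 0 < k := by rw [hk]; exact Real.sqrt_pos.mpr (by positivity)
  have hmu : 0 < k + lam := by
    rcases le_or_gt 0 lam with h | h
    · linarith
    · nlinarith
  have hd : (0:ℝ) < k + lam + 1 := by linarith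
  have hαpos : 0 < ‖c‖ := by
    simpa using hc
  set c0 : ℂ := 2 * (k:ℂ) * I with hc0
  set P : ℂ := c * Complex.exp (2*I*(2*(k:ℂ)*lam*t + t)) / ((k:ℂ)+lam+1)^2 with hP
  set Q : ℂ := (starRingEnd ℂ) c * ((k:ℂ)+lam)^2 *
    Complex.exp (-(2*I*(2*(k:ℂ)*lam*t - t))) / ((k:ℂ)+lam+1)^2 with hQ
  have hdenc : ((k:ℂ)+lam+1) ≠ 0 := by
    have h1 : ((k:ℂ)+lam+1) = ((k+lam+1 : ℝ) : ℂ) := by push_cast; ring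
    rw [h1]
    exact_mod_cast hd.ne'
  have hFx : ∀ x : ℝ, F x = P * Complex.exp (c0 * x) + Q * Complex.exp (-c0 * x) := by
    intro x
    rw [hF, hψ₁, hψ₂]
    have e1 : Complex.exp (I * ((k:ℂ) * x + 2 * k * lam * t + t)) ^ 2
        = Complex.exp (2*I*(2*(k:ℂ)*lam*t + t)) * Complex.exp (c0 * x) := by
      rw [sq, ← Complex.exp_add, ← Complex.exp_add]; congr 1; rw [hc0]; ring
    have t1 : c * (Complex.exp (I * ((k:ℂ) * x + 2 * k * lam * t + t)) / ((k:ℂ)+lam+1))^2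
        = P * Complex.exp (c0 * x) := by
      rw [div_pow, e1, hP]; ring
    have t2 : (starRingEnd ℂ) c * ((starRingEnd ℂ) (((k:ℂ)+lam) *
          Complex.exp (I * ((k:ℂ) * x + 2 * k * lam * t - t)) / ((k:ℂ)+lam+1)))^2
        = Q * Complex.exp (-c0 * x) := by
      rw [map_div₀, map_mul, ← Complex.exp_conj]
      simp only [map_add, map_sub, map_mul, map_one, Complex.conj_ofReal, Complex.conj_I,
        map_ofNat]
      have e2 : Complex.exp (-I * ((k:ℂ) * x + 2 * k * lam * t - t)) ^ 2
          = Complex.exp (-(2*I*(2*(k:ℂ)*lam*t - t))) * Complex.exp (-c0 * x) := by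
        rw [sq, ← Complex.exp_add, ← Complex.exp_add]; congr 1; rw [hc0]; ring
      rw [div_pow, mul_pow, e2, hQ]; ring
    rw [t1, t2]
  have hexp : ∀ (a : ℂ) (x : ℝ), HasDerivAt (fun y : ℝ => Complex.exp (a * y))
      (a * Complex.exp (a * x)) x := by
    intro a x
    have h : HasDerivAt (fun z : ℂ => Complex.exp (a * z)) (Complex.exp (a * x) * (a * 1))
        (x : ℂ) := ((hasDerivAt_id (x:ℂ)).const_mul a).cexp
    simpa [mul_comm] using h.comp_ofReal
  intro x
  have hG : HasDerivAt F (c0 * (P * Complex.exp (c0 * x) - Q * Complex.exp (-c0 * x))) x := by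
    have h1 := ((hexp c0 x).const_mul P).add ((hexp (-c0) x).const_mul Q)
    have hFeq : F = fun y : ℝ => P * Complex.exp (c0 * y) + Q * Complex.exp (-c0 * y) :=
      funext hFx
    rw [hFeq]
    refine (h1 : HasDerivAt (fun y : ℝ => P * Complex.exp (c0 * y) + Q * Complex.exp (-c0 * y)) _ x).congr_deriv ?_
    ring
  have hderiv : deriv F x = c0 * (P * Complex.exp (c0 * x) - Q * Complex.exp (-c0 * x)) :=
    hG.deriv
  set A : ℂ := P * Complex.exp (c0 * x) with hA
  set B : ℂ := Q * Complex.exp (-c0 * x) with hB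
  clear_value c0 P Q A B
  -- absolute values
  have hexpabs : ∀ r : ℝ, ‖Complex.exp ((r : ℝ) * I)‖ = 1 := by
    intro r
    rw [Complex.norm_exp]
    simp
  have habsA : ‖A‖ = ‖c‖ / (k+lam+1)^2 := by
    rw [hA, hP, hc0]
    rw [norm_mul, norm_div, norm_mul]
    have h2 : (2 * (k:ℂ) * I * x) = (((2*k*x) : ℝ) : ℂ) * I := by push_cast; ring
    have h3 : ((k:ℂ)+lam+1) = (((k+lam+1 : ℝ)) : ℂ) := by push_cast; ring
    rw [h2, hexpabs]
    rw [h3, norm_pow, Complex.norm_real, Real.norm_eq_abs, abs_of_pos hd]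
    have h4 : ‖Complex.exp (2 * I * (2*(k:ℂ)*lam*t + t))‖ = 1 := by
      rw [Complex.norm_exp]; simp [Complex.mul_re]
    rw [h4]
    ring
  have habsB : ‖B‖ = ‖c‖ * (k+lam)^2 / (k+lam+1)^2 := by
    rw [hB, hQ, hc0]
    rw [norm_mul, norm_div, norm_mul, norm_mul]
    have h3 : ((k:ℂ)+lam+1) = (((k+lam+1 : ℝ)) : ℂ) := by push_cast; ring
    have h5 : ((k:ℂ)+lam) = (((k+lam : ℝ)) : ℂ) := by push_cast; ring
    have h4 : ‖Complex.exp (-(2 * I * (2*(k:ℂ)*lam*t - t)))‖ = 1 := by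
      rw [Complex.norm_exp]; simp [Complex.mul_re]
    have h6 : ‖Complex.exp (-(2 * (k:ℂ) * I) * x)‖ = 1 := by
      rw [Complex.norm_exp]; simp [Complex.mul_re]
    rw [h4, h6, h3, h5, norm_pow, norm_pow, Complex.norm_real, Real.norm_eq_abs, Complex.norm_real, Real.norm_eq_abs,
      abs_of_pos hd, abs_of_pos hmu, Complex.norm_conj]
    ring
  have hmusq : (k+lam)^2 = 1 + 2*lam*(k+lam) := by nlinarith
  have habsne : ‖A‖ ≠ ‖B‖ := by
    rw [habsA, habsB]
    intro h
    have hD : ((k+lam+1)^2 : ℝ) ≠ 0 := by positivity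
    rw [div_eq_div_iff hD hD] at h
    have h7 : (k+lam)^2 = 1 := by
      have := mul_right_cancel₀ hD h
      nlinarith [hαpos]
    rcases hlam.lt_or_gt with h8 | h8 <;> nlinarith
  have hFne : F x ≠ 0 := by
    rw [hFx x]
    intro h
    have : A = -B := by rw [hA, hB] at *; linear_combination h
    apply habsne
    rw [this, norm_neg]
  -- imaginary part identity
  have hconjAB : (A - B) * (starRingEnd ℂ) (A + B)
      = ((Complex.normSq A - Complex.normSq B : ℝ) : ℂ)
        + ((2 * (A * (starRingEnd ℂ) B).im : ℝ) : ℂ) * I := by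
    have hc1 : (starRingEnd ℂ) (A * (starRingEnd ℂ) B) = B * (starRingEnd ℂ) A := by
      rw [map_mul, Complex.conj_conj]; ring
    have hc2 := Complex.sub_conj (A * (starRingEnd ℂ) B)
    rw [hc1] at hc2
    have hc3 := Complex.mul_conj A
    have hc4 := Complex.mul_conj B
    rw [map_add]
    push_cast at hc2 ⊢
    linear_combination hc2 + hc3 - hc4
  have hFAB : F x = A + B := by rw [hA, hB]; exact hFx x
  have him1 : deriv F x / F x
      = 2*(k:ℂ)*I * ((A - B) * (starRingEnd ℂ) (A + B)) * ((((Complex.normSq (A+B))⁻¹ : ℝ)) : ℂ) := by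
    rw [hderiv, hFAB, div_eq_mul_inv, Complex.inv_def, hc0]; ring
  rw [hconjAB] at him1
  have hgen : ∀ (a u w r : ℝ), (2*(a:ℂ)*I * (((u : ℝ):ℂ) + ((w:ℝ):ℂ)*I) * ((r : ℝ):ℂ)).im
      = 2*a*u*r := by
    intro a u w r
    simp only [Complex.mul_im, Complex.mul_re, Complex.add_im, Complex.add_re,
      Complex.ofReal_re, Complex.ofReal_im, Complex.I_re, Complex.I_im,
      Complex.re_ofNat, Complex.im_ofNat]
    ring
  have him : (deriv F x / F x).im
      = 2*k*(Complex.normSq A - Complex.normSq B) * (Complex.normSq (A+B))⁻¹ := by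
    rw [him1]
    exact hgen k (Complex.normSq A - Complex.normSq B) _ _
  have hnormA : Complex.normSq A = (‖c‖ / (k+lam+1)^2)^2 := by
    rw [← Complex.sq_norm, habsA]
  have hnormB : Complex.normSq B = (‖c‖ * (k+lam)^2 / (k+lam+1)^2)^2 := by
    rw [← Complex.sq_norm, habsB]
  have hpos : 0 < Complex.normSq (A+B) := by
    rw [← hFAB]; exact Complex.normSq_pos.mpr hFne
  have hDne : ((k+lam+1) : ℝ) ≠ 0 := hd.ne'
  have hsub : Complex.normSq A - Complex.normSq B
      = (‖c‖)^2 * (1 - ((k+lam)^2)^2) / ((k+lam+1)^2)^2 := by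
    rw [hnormA, hnormB]; field_simp
  have hfac : 1 - ((k+lam)^2)^2 = -(2*lam*((k+lam) * (1 + (k+lam)^2))) := by
    linear_combination (-(1+(k+lam)^2)) * hmusq
  have h2 : (0:ℝ) < ((k+lam+1)^2)^2 := by positivity
  have h3 : 0 < (‖c‖)^2 := by positivity
  have hX : 0 < (k+lam) * (1 + (k+lam)^2) := mul_pos hmu (by positivity)
  constructor
  · intro hl
    rw [him]
    apply mul_neg_of_neg_of_pos _ (inv_pos.mpr hpos)
    rw [hsub, hfac]
    have hE : 0 < 2*lam*((k+lam) * (1 + (k+lam)^2)) := mul_pos (by linarith) hX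
    have h4 : (‖c‖)^2 * (-(2*lam*((k+lam) * (1 + (k+lam)^2)))) / ((k+lam+1)^2)^2 < 0 :=
      div_neg_of_neg_of_pos (mul_neg_of_pos_of_neg h3 (by linarith)) h2
    exact mul_neg_of_pos_of_neg (by linarith : (0:ℝ) < 2*k) h4
  · intro hl
    rw [him]
    apply mul_pos _ (inv_pos.mpr hpos)
    rw [hsub, hfac]
    have hE : 2*lam*((k+lam) * (1 + (k+lam)^2)) < 0 :=
      mul_neg_of_neg_of_pos (by linarith) hX
    have h4 : 0 < (‖c‖)^2 * (-(2*lam*((k+lam) * (1 + (k+lam)^2)))) / ((k+lam+1)^2)^2 :=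
      div_pos (mul_pos h3 (by linarith)) h2
    exact mul_pos (by linarith : (0:ℝ) < 2*k) h4
end

section
/- The isoperiodic deformation system (with controls c₁,...,c_{g+1} real-analytic functions) dλ_j/dξ = −Σ_k c_k/(λ_j − α_k), dα_k/dξ = Σ_{ℓ≠k} (c_k + c_ℓ)/(α_ℓ − α_k) − ½ Σ_j c_k/(λ_j − α_k) preserves the conditions λ₄ = λ₃ = α₂ (a triple coincidence of two branch points with a critical point): if at some ξ₀ one has λ₃(ξ₀) = λ₄(ξ₀) = α₂(ξ₀), c₂ ≡ 0, and the equations are interpreted by continuity (the singular terms 1/(λ₃−α₂), 1/(λ₄−α₂) are absent since c₂ = 0 multiplies them), then λ₃(ξ) = λ₄(ξ) = α₂(ξ) for all ξ in the interval of existence. -/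
/-!
The velocity `-∑ₖ cₖ / (z - αₖ)` of `λ₃`, `λ₄` and `α₂` is the same function of the position `z`,
and the difference of its values at two positions `x` and `y` equals `(x - y)` times a factor that
stays continuous as long as neither point meets a pole `αₖ`. Hence `λ₃ - α₂` and `λ₄ - α₂` solve
linear equations `f' = h f` with continuous `h`, and by Grönwall a solution vanishing at one time
vanishes on the whole connected interval.
-/

open Complex Finset Set

section LinearODE

variable {𝕜 E : Type*} [NormedField 𝕜] [NormedAddCommGroup E] [NormedSpace 𝕜 E]
  [NormedSpace ℝ E]

theorem eqOn_zero_of_hasDerivAt_smul_self {f : ℝ → E} {h : ℝ → 𝕜} {s : Set ℝ}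
    (hs : IsPreconnected s) (hh : ContinuousOn h s)
    (hf : ∀ t ∈ s, HasDerivAt f (h t • f t) t) {t₀ : ℝ} (ht₀ : t₀ ∈ s) (hf₀ : f t₀ = 0) :
    EqOn f 0 s := by
  intro t ht
  have hsub : uIcc t₀ t ⊆ s := hs.ordConnected.uIcc_subset ht₀ ht
  obtain ⟨C, hC⟩ := isCompact_uIcc.exists_bound_of_continuousOn (hh.mono hsub)
  have hlip : ∀ τ ∈ uIcc t₀ t, LipschitzOnWith C.toNNReal (h τ • · : E → E) univ := by
    intro τ hτ
    have hbound : ‖h τ‖₊ ≤ C.toNNReal := by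
      rw [← NNReal.coe_le_coe, coe_nnnorm, Real.coe_toNNReal']
      exact (hC τ hτ).trans (le_max_left C 0)
    exact ((lipschitzWith_smul (h τ)).weaken hbound).lipschitzOnWith
  have hfc : ContinuousOn f (uIcc t₀ t) := fun τ hτ =>
    (hf τ (hsub hτ)).continuousAt.continuousWithinAt
  have h0 : ∀ τ : ℝ, ∀ J : Set ℝ, HasDerivWithinAt (0 : ℝ → E) (h τ • (0 : ℝ → E) τ) J τ :=
    fun τ J => by rw [Pi.zero_apply, smul_zero]; exact hasDerivWithinAt_const τ J 0
  rcases le_total t₀ t with hle | hle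
  · rw [uIcc_of_le hle] at hsub hlip hfc
    exact ODE_solution_unique_of_mem_Icc_right (fun τ hτ => hlip τ (Ico_subset_Icc_self hτ))
      hfc (fun τ hτ => (hf τ (hsub (Ico_subset_Icc_self hτ))).hasDerivWithinAt)
      (fun _ _ => mem_univ _) continuousOn_const (fun τ _ => h0 τ _) (fun _ _ => mem_univ _)
      hf₀ (right_mem_Icc.2 hle)
  · rw [uIcc_of_ge hle] at hsub hlip hfc
    exact ODE_solution_unique_of_mem_Icc_left (fun τ hτ => hlip τ (Ioc_subset_Icc_self hτ))
      hfc (fun τ hτ => (hf τ (hsub (Ioc_subset_Icc_self hτ))).hasDerivWithinAt)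
      (fun _ _ => mem_univ _) continuousOn_const (fun τ _ => h0 τ _) (fun _ _ => mem_univ _)
      hf₀ (left_mem_Icc.2 hle)

end LinearODE

section IsoperiodicVelocity

variable {ι 𝕜 : Type*}

def isoperiodicVelocity [Field 𝕜] (S : Finset ι) (c a : ι → ℝ → 𝕜) (ξ : ℝ) (z : 𝕜) : 𝕜 :=
  -∑ k ∈ S, c k ξ / (z - a k ξ)

theorem isoperiodicVelocity_sub [Field 𝕜] (S : Finset ι) (c a : ι → ℝ → 𝕜) (ξ : ℝ) {x y : 𝕜}
    (hx : ∀ k ∈ S, x ≠ a k ξ) (hy : ∀ k ∈ S, y ≠ a k ξ) :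
    isoperiodicVelocity S c a ξ x - isoperiodicVelocity S c a ξ y =
      (∑ k ∈ S, c k ξ / ((x - a k ξ) * (y - a k ξ))) * (x - y) := by
  simp only [isoperiodicVelocity, neg_sub_neg, ← sum_sub_distrib, sum_mul]
  refine sum_congr rfl fun k hk => ?_
  have hxk := sub_ne_zero.2 (hx k hk)
  have hyk := sub_ne_zero.2 (hy k hk)
  field_simp
  ring

theorem eqOn_of_hasDerivAt_isoperiodicVelocity [RCLike 𝕜] {S : Finset ι} {c a : ι → ℝ → 𝕜}
    {s : Set ℝ} (hs : IsPreconnected s) (hc : ∀ k ∈ S, ContinuousOn (c k) s)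
    (ha : ∀ k ∈ S, ContinuousOn (a k) s) {x y : ℝ → 𝕜}
    (hxa : ∀ ξ ∈ s, ∀ k ∈ S, x ξ ≠ a k ξ) (hya : ∀ ξ ∈ s, ∀ k ∈ S, y ξ ≠ a k ξ)
    (hx : ∀ ξ ∈ s, HasDerivAt x (isoperiodicVelocity S c a ξ (x ξ)) ξ)
    (hy : ∀ ξ ∈ s, HasDerivAt y (isoperiodicVelocity S c a ξ (y ξ)) ξ)
    {ξ₀ : ℝ} (hξ₀ : ξ₀ ∈ s) (hxy₀ : x ξ₀ = y ξ₀) :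
    EqOn x y s := by
  have hxc : ContinuousOn x s := fun ξ hξ => (hx ξ hξ).continuousAt.continuousWithinAt
  have hyc : ContinuousOn y s := fun ξ hξ => (hy ξ hξ).continuousAt.continuousWithinAt
  have hrate : ContinuousOn (fun ξ => ∑ k ∈ S, c k ξ / ((x ξ - a k ξ) * (y ξ - a k ξ))) s :=
    continuousOn_finsetSum S fun k hk => (hc k hk).div
      ((hxc.sub (ha k hk)).mul (hyc.sub (ha k hk)))
      fun ξ hξ => mul_ne_zero (sub_ne_zero.2 (hxa ξ hξ k hk)) (sub_ne_zero.2 (hya ξ hξ k hk))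
  have hlin : ∀ ξ ∈ s, HasDerivAt (x - y)
      ((∑ k ∈ S, c k ξ / ((x ξ - a k ξ) * (y ξ - a k ξ))) • (x - y) ξ) ξ := fun ξ hξ => by
    simpa only [Pi.sub_apply, smul_eq_mul,
      ← isoperiodicVelocity_sub S c a ξ (hxa ξ hξ) (hya ξ hξ)] using (hx ξ hξ).sub (hy ξ hξ)
  intro ξ hξ
  exact sub_eq_zero.1 (eqOn_zero_of_hasDerivAt_smul_self hs hrate hlin hξ₀
    (sub_eq_zero.2 hxy₀) hξ)

end IsoperiodicVelocity

-- Indices are 0-based: `lam 2`, `lam 3`, `a 1` are `λ₃`, `λ₄`, `α₂`.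
theorem stmt14_general (g : ℕ) (s : Set ℝ) (hconn : IsPreconnected s)
    (lam a c : ℕ → ℝ → ℂ)
    (hccont : ∀ k, ContinuousOn (c k) s)
    (hacont : ∀ k, ContinuousOn (a k) s)
    (hne : ∀ ξ ∈ s, ∀ k ∈ (Finset.range (g + 1)).erase 1,
      lam 2 ξ ≠ a k ξ ∧ lam 3 ξ ≠ a k ξ ∧ a 1 ξ ≠ a k ξ)
    (hl2 : ∀ ξ ∈ s, HasDerivAt (lam 2)
      (-∑ k ∈ (Finset.range (g + 1)).erase 1, c k ξ / (lam 2 ξ - a k ξ)) ξ)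
    (hl3 : ∀ ξ ∈ s, HasDerivAt (lam 3)
      (-∑ k ∈ (Finset.range (g + 1)).erase 1, c k ξ / (lam 3 ξ - a k ξ)) ξ)
    (ha1 : ∀ ξ ∈ s, HasDerivAt (a 1)
      (-∑ k ∈ (Finset.range (g + 1)).erase 1, c k ξ / (a 1 ξ - a k ξ)) ξ)
    (ξ₀ : ℝ) (hξ₀ : ξ₀ ∈ s)
    (hinit : lam 2 ξ₀ = a 1 ξ₀ ∧ lam 3 ξ₀ = a 1 ξ₀) :
    ∀ ξ ∈ s, lam 2 ξ = a 1 ξ ∧ lam 3 ξ = a 1 ξ := by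
  have hα : ∀ ξ ∈ s, ∀ k ∈ (range (g + 1)).erase 1, a 1 ξ ≠ a k ξ :=
    fun ξ hξ k hk => (hne ξ hξ k hk).2.2
  have hlam₂ : EqOn (lam 2) (a 1) s :=
    eqOn_of_hasDerivAt_isoperiodicVelocity hconn (fun k _ => hccont k) (fun k _ => hacont k)
      (fun ξ hξ k hk => (hne ξ hξ k hk).1) hα hl2 ha1 hξ₀ hinit.1
  have hlam₃ : EqOn (lam 3) (a 1) s :=
    eqOn_of_hasDerivAt_isoperiodicVelocity hconn (fun k _ => hccont k) (fun k _ => hacont k)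
      (fun ξ hξ k hk => (hne ξ hξ k hk).2.1) hα hl3 ha1 hξ₀ hinit.2
  exact fun ξ hξ => ⟨hlam₂ hξ, hlam₃ hξ⟩

/-- The isoperiodic deformation system with control `c₂ ≡ 0` preserves the triple
coincidence `λ₃ = λ₄ = α₂` (0-based: `lam 2 = lam 3 = a 1`): if the coincidence holds
at some `ξ₀` in a connected open interval of existence, it holds throughout. -/
theorem stmt14 (g : ℕ) (s : Set ℝ) (hs : IsOpen s) (hconn : IsPreconnected s)
    (lam a c : ℕ → ℝ → ℂ)
    (hccont : ∀ k, ContinuousOn (c k) s)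
    (hacont : ∀ k, ContinuousOn (a k) s)
    (hc2 : ∀ ξ, c 1 ξ = 0)
    (hne : ∀ ξ ∈ s, ∀ k ∈ (Finset.range (g + 1)).erase 1,
      lam 2 ξ ≠ a k ξ ∧ lam 3 ξ ≠ a k ξ ∧ a 1 ξ ≠ a k ξ)
    (hl2 : ∀ ξ ∈ s, HasDerivAt (lam 2)
      (-∑ k ∈ (Finset.range (g + 1)).erase 1, c k ξ / (lam 2 ξ - a k ξ)) ξ)
    (hl3 : ∀ ξ ∈ s, HasDerivAt (lam 3)
      (-∑ k ∈ (Finset.range (g + 1)).erase 1, c k ξ / (lam 3 ξ - a k ξ)) ξ)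
    (ha1 : ∀ ξ ∈ s, HasDerivAt (a 1)
      (-∑ k ∈ (Finset.range (g + 1)).erase 1, c k ξ / (a 1 ξ - a k ξ)) ξ)
    (ξ₀ : ℝ) (hξ₀ : ξ₀ ∈ s)
    (hinit : lam 2 ξ₀ = a 1 ξ₀ ∧ lam 3 ξ₀ = a 1 ξ₀) :
    ∀ ξ ∈ s, lam 2 ξ = a 1 ξ ∧ lam 3 ξ = a 1 ξ :=
  stmt14_general g s hconn lam a c hccont hacont hne hl2 hl3 ha1 ξ₀ hξ₀ hinit
end

section
/- Suppose Φ₀(x) is a smooth invertible 2×2-matrix-valued function that depends smoothly on a parameter λ, with γ₀ = Φ₀⁻¹ dΦ₀/dλ, and let B₁(x) = ∫₀ˣ Φ₀(s)⁻¹ Q₁(s) Φ₀(s) ds, where Q₁ is a given smooth matrix-valued function independent of λ. Then dB₁/dλ = [B₁, γ₀] − ∫₀ˣ [B₁(s), T(s)] ds, where T = ∂_x(Φ₀⁻¹ ∂_λ Φ₀), i.e. T(s) = d/ds (γ₀(s)). -/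
open Complex Matrix

lemma entry_mul_deriv {A B : ℝ → Matrix (Fin 2) (Fin 2) ℂ}
    {A' B' : Matrix (Fin 2) (Fin 2) ℂ} {t : ℝ}
    (hA : ∀ i j, HasDerivAt (fun u => A u i j) (A' i j) t)
    (hB : ∀ i j, HasDerivAt (fun u => B u i j) (B' i j) t) (i j : Fin 2) :
    HasDerivAt (fun u => (A u * B u) i j) ((A' * B t + A t * B') i j) t := by
  simp only [Matrix.mul_apply, Matrix.add_apply]
  rw [← Finset.sum_add_distrib]
  exact HasDerivAt.fun_sum fun k _ => (hA i k).mul (hB k j)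

lemma cont_slice {f : ℝ × ℝ → ℂ} (hf : Continuous f) (l : ℝ) :
    Continuous fun t => f (l, t) := hf.comp (Continuous.prodMk_right l)

lemma cont_entry_mul {α : Type*} [TopologicalSpace α] {A B : α → Matrix (Fin 2) (Fin 2) ℂ}
    (hA : ∀ i j, Continuous fun p => A p i j) (hB : ∀ i j, Continuous fun p => B p i j)
    (i j : Fin 2) : Continuous fun p => (A p * B p) i j := by
  simp only [Matrix.mul_apply]
  exact continuous_finset_sum _ fun k _ => (hA i k).mul (hB k j)

lemma inv_entry_deriv {Φ : ℝ → Matrix (Fin 2) (Fin 2) ℂ} {Φl : Matrix (Fin 2) (Fin 2) ℂ}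
    {t : ℝ} (hu : ∀ u, IsUnit (Φ u))
    (hΦ : ∀ i j, HasDerivAt (fun u => Φ u i j) (Φl i j) t) (i j : Fin 2) :
    HasDerivAt (fun u => (Φ u)⁻¹ i j) ((-((Φ t)⁻¹ * Φl * (Φ t)⁻¹)) i j) t := by
  have hdet : ∀ u, Matrix.det (Φ u) ≠ 0 := fun u =>
    ((Matrix.isUnit_iff_isUnit_det _).mp (hu u)).ne_zero
  have hΦI : ∀ u, Φ u * (Φ u)⁻¹ = 1 := fun u =>
    Matrix.mul_nonsing_inv _ ((Matrix.isUnit_iff_isUnit_det _).mp (hu u))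
  have hIΦ : (Φ t)⁻¹ * Φ t = 1 :=
    Matrix.nonsing_inv_mul _ ((Matrix.isUnit_iff_isUnit_det _).mp (hu t))
  have hInvEntry : ∀ u (i j : Fin 2),
      (Φ u)⁻¹ i j = (Matrix.det (Φ u))⁻¹ * Matrix.adjugate (Φ u) i j := by
    intro u i j
    simp [Matrix.inv_def, Ring.inverse_eq_inv, Matrix.smul_apply, smul_eq_mul]
  have hdetderiv : HasDerivAt (fun u => Matrix.det (Φ u))
      (Φl 0 0 * Φ t 1 1 + Φ t 0 0 * Φl 1 1 - (Φl 0 1 * Φ t 1 0 + Φ t 0 1 * Φl 1 0)) t := by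
    simp only [Matrix.det_fin_two]
    exact ((hΦ 0 0).mul (hΦ 1 1)).sub ((hΦ 0 1).mul (hΦ 1 0))
  have hadjderiv : ∀ i j : Fin 2,
      HasDerivAt (fun u => Matrix.adjugate (Φ u) i j) (Matrix.adjugate Φl i j) t := by
    intro i j
    fin_cases i <;> fin_cases j <;>
      simp only [Matrix.adjugate_fin_two, Matrix.of_apply, Matrix.cons_val', Matrix.cons_val_zero,
        Matrix.cons_val_one, Matrix.head_cons, Matrix.empty_val', Matrix.cons_val_fin_one,
        Matrix.head_fin_const] <;>
      first
        | exact hΦ 1 1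
        | exact (hΦ 0 1).neg
        | exact (hΦ 1 0).neg
        | exact hΦ 0 0
  have hdi : HasDerivAt (fun u => (Matrix.det (Φ u))⁻¹)
      ((Φl 0 0 * Φ t 1 1 + Φ t 0 0 * Φl 1 1 - (Φl 0 1 * Φ t 1 0 + Φ t 0 1 * Φl 1 0)) •
        -(Matrix.det (Φ t) ^ 2)⁻¹) t :=
    HasDerivAt.scomp t (hasDerivAt_inv (hdet t)) hdetderiv
  have hex : ∃ J : Matrix (Fin 2) (Fin 2) ℂ,
      ∀ i j : Fin 2, HasDerivAt (fun u => (Φ u)⁻¹ i j) (J i j) t := by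
    refine ⟨Matrix.of fun i j =>
      (Φl 0 0 * Φ t 1 1 + Φ t 0 0 * Φl 1 1 - (Φl 0 1 * Φ t 1 0 + Φ t 0 1 * Φl 1 0)) •
          -(Matrix.det (Φ t) ^ 2)⁻¹ * Matrix.adjugate (Φ t) i j
        + (Matrix.det (Φ t))⁻¹ * Matrix.adjugate Φl i j, fun i j => ?_⟩
    simp only [hInvEntry, Matrix.of_apply]
    exact hdi.mul (hadjderiv i j)
  obtain ⟨J, hJ⟩ := hex
  have hkey : Φ t * J = -(Φl * (Φ t)⁻¹) := by
    ext i j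
    have h1 : HasDerivAt (fun u => (Φ u * (Φ u)⁻¹) i j)
        ((Φl * (Φ t)⁻¹ + Φ t * J) i j) t :=
      entry_mul_deriv (fun i j => hΦ i j) hJ i j
    have h2 : (fun u => (Φ u * (Φ u)⁻¹) i j) = fun _ => (1 : Matrix (Fin 2) (Fin 2) ℂ) i j := by
      funext u; rw [hΦI u]
    rw [h2] at h1
    have h3 := (hasDerivAt_const t ((1 : Matrix (Fin 2) (Fin 2) ℂ) i j)).unique h1
    simp only [Matrix.neg_apply, Matrix.add_apply] at h3 ⊢
    linear_combination -h3
  have hJeq : J = -((Φ t)⁻¹ * Φl * (Φ t)⁻¹) := by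
    have h4 : J = (Φ t)⁻¹ * (Φ t * J) := by rw [← Matrix.mul_assoc, hIΦ, Matrix.one_mul]
    rw [h4, hkey, mul_neg, ← Matrix.mul_assoc]
  exact hJeq ▸ hJ i j

/-- Differentiation of `B₁(x;λ) = ∫₀ˣ Φ₀⁻¹ Q₁ Φ₀ ds` with respect to the spectral
parameter: `dB₁/dλ = [B₁, γ₀] − ∫₀ˣ [B₁, T] ds`, where `γ₀ = Φ₀⁻¹ ∂Φ₀/∂λ` and
`T = ∂γ₀/∂x`. -/
theorem stmt17 (Φ Φl : ℝ → ℝ → Matrix (Fin 2) (Fin 2) ℂ)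
    (Q₁ : ℝ → Matrix (Fin 2) (Fin 2) ℂ)
    (γ Tm : ℝ → ℝ → Matrix (Fin 2) (Fin 2) ℂ)
    (B : ℝ → ℝ → Matrix (Fin 2) (Fin 2) ℂ)
    (hinv : ∀ l x, IsUnit (Φ l x))
    (hΦl : ∀ l x (i j : Fin 2), HasDerivAt (fun l' => Φ l' x i j) (Φl l x i j) l)
    (hΦcont : ∀ i j : Fin 2, Continuous fun p : ℝ × ℝ => Φ p.1 p.2 i j)
    (hΦlcont : ∀ i j : Fin 2, Continuous fun p : ℝ × ℝ => Φl p.1 p.2 i j)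
    (hQcont : ∀ i j : Fin 2, Continuous fun s : ℝ => Q₁ s i j)
    (hγ : ∀ l x, γ l x = (Φ l x)⁻¹ * Φl l x)
    (hT : ∀ l x (i j : Fin 2), HasDerivAt (fun x' => γ l x' i j) (Tm l x i j) x)
    (hTcont : ∀ i j : Fin 2, Continuous fun p : ℝ × ℝ => Tm p.1 p.2 i j)
    (hB : ∀ l x, B l x =
      Matrix.of fun i j => ∫ s in (0:ℝ)..x, ((Φ l s)⁻¹ * Q₁ s * Φ l s) i j) :
    ∀ l x (i j : Fin 2),
      HasDerivAt (fun l' => B l' x i j)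
        ((B l x * γ l x - γ l x * B l x
          - Matrix.of fun i' j' =>
              ∫ s in (0:ℝ)..x, (B l s * Tm l s - Tm l s * B l s) i' j') i j) l := by
  have hdet : ∀ l x, Matrix.det (Φ l x) ≠ 0 := fun l x =>
    ((Matrix.isUnit_iff_isUnit_det _).mp (hinv l x)).ne_zero
  have hΦI : ∀ l x, Φ l x * (Φ l x)⁻¹ = 1 := fun l x =>
    Matrix.mul_nonsing_inv _ ((Matrix.isUnit_iff_isUnit_det _).mp (hinv l x))
  have hdetcont : Continuous fun p : ℝ × ℝ => Matrix.det (Φ p.1 p.2) := by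
    simp only [Matrix.det_fin_two]
    exact ((hΦcont 0 0).mul (hΦcont 1 1)).sub ((hΦcont 0 1).mul (hΦcont 1 0))
  have hadjcont : ∀ i j : Fin 2,
      Continuous fun p : ℝ × ℝ => Matrix.adjugate (Φ p.1 p.2) i j := by
    intro i j
    fin_cases i <;> fin_cases j <;>
      simp only [Matrix.adjugate_fin_two, Matrix.of_apply, Matrix.cons_val', Matrix.cons_val_zero,
        Matrix.cons_val_one, Matrix.head_cons, Matrix.empty_val', Matrix.cons_val_fin_one,
        Matrix.head_fin_const] <;>
      first
        | exact hΦcont 1 1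
        | exact (hΦcont 0 1).neg
        | exact (hΦcont 1 0).neg
        | exact hΦcont 0 0
  have hInvcont : ∀ i j : Fin 2, Continuous fun p : ℝ × ℝ => (Φ p.1 p.2)⁻¹ i j := by
    intro i j
    have he : ∀ p : ℝ × ℝ, (Φ p.1 p.2)⁻¹ i j
        = (Matrix.det (Φ p.1 p.2))⁻¹ * Matrix.adjugate (Φ p.1 p.2) i j := by
      intro p
      simp [Matrix.inv_def, Ring.inverse_eq_inv, Matrix.smul_apply, smul_eq_mul]
    simp only [he]
    exact (hdetcont.inv₀ fun p => hdet p.1 p.2).mul (hadjcont i j)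
  have hγcont : ∀ i j : Fin 2, Continuous fun p : ℝ × ℝ => γ p.1 p.2 i j := by
    intro i j
    simp only [hγ]
    exact cont_entry_mul (A := fun p : ℝ × ℝ => (Φ p.1 p.2)⁻¹)
      (B := fun p : ℝ × ℝ => Φl p.1 p.2) hInvcont hΦlcont i j
  have hFcont : ∀ i j : Fin 2,
      Continuous fun p : ℝ × ℝ => ((Φ p.1 p.2)⁻¹ * Q₁ p.2 * Φ p.1 p.2) i j := fun i j =>
    cont_entry_mul (A := fun p : ℝ × ℝ => (Φ p.1 p.2)⁻¹ * Q₁ p.2)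
      (B := fun p : ℝ × ℝ => Φ p.1 p.2)
      (cont_entry_mul hInvcont (fun i j => (hQcont i j).comp continuous_snd)) hΦcont i j
  -- λ-derivative of the integrand
  have hFl : ∀ l s (i j : Fin 2),
      HasDerivAt (fun l' => ((Φ l' s)⁻¹ * Q₁ s * Φ l' s) i j)
        ((((Φ l s)⁻¹ * Q₁ s * Φ l s) * γ l s - γ l s * ((Φ l s)⁻¹ * Q₁ s * Φ l s)) i j) l := by
    intro l s i j
    have hI := inv_entry_deriv (fun u => hinv u s) (fun i j => hΦl l s i j)
    have h1 : ∀ i j : Fin 2, HasDerivAt (fun l' => ((Φ l' s)⁻¹ * Q₁ s) i j)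
        ((-((Φ l s)⁻¹ * Φl l s * (Φ l s)⁻¹) * Q₁ s + (Φ l s)⁻¹ * (0 : Matrix (Fin 2) (Fin 2) ℂ)) i j) l :=
      fun i j => entry_mul_deriv hI
        (fun i j => by simpa using hasDerivAt_const l (Q₁ s i j)) i j
    have h2 := entry_mul_deriv (A := fun l' => (Φ l' s)⁻¹ * Q₁ s) (B := fun l' => Φ l' s)
      h1 (fun i j => hΦl l s i j) i j
    have hval : (-((Φ l s)⁻¹ * Φl l s * (Φ l s)⁻¹) * Q₁ s
            + (Φ l s)⁻¹ * (0 : Matrix (Fin 2) (Fin 2) ℂ)) * Φ l s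
          + ((Φ l s)⁻¹ * Q₁ s) * Φl l s
        = ((Φ l s)⁻¹ * Q₁ s * Φ l s) * γ l s - γ l s * ((Φ l s)⁻¹ * Q₁ s * Φ l s) := by
      rw [hγ]
      have e1 : ((Φ l s)⁻¹ * Q₁ s * Φ l s) * ((Φ l s)⁻¹ * Φl l s)
          = (Φ l s)⁻¹ * Q₁ s * Φl l s := by
        rw [Matrix.mul_assoc ((Φ l s)⁻¹ * Q₁ s) (Φ l s) ((Φ l s)⁻¹ * Φl l s),
          ← Matrix.mul_assoc (Φ l s) ((Φ l s)⁻¹) (Φl l s), hΦI, Matrix.one_mul]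
      have e2 : (-((Φ l s)⁻¹ * Φl l s * (Φ l s)⁻¹) * Q₁ s) * Φ l s
          = -(((Φ l s)⁻¹ * Φl l s) * ((Φ l s)⁻¹ * Q₁ s * Φ l s)) := by
        simp only [Matrix.neg_mul, Matrix.mul_assoc]
      rw [Matrix.mul_zero, add_zero, e1, e2]
      abel
    rw [← hval]
    exact h2
  -- x-derivative of B (FTC)
  have hBs : ∀ l x (i j : Fin 2),
      HasDerivAt (fun s => B l s i j) (((Φ l x)⁻¹ * Q₁ x * Φ l x) i j) x := by
    intro l x i j
    have hc : Continuous fun t : ℝ => ((Φ l t)⁻¹ * Q₁ t * Φ l t) i j :=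
      cont_slice (hFcont i j) l
    have hfun : (fun s => B l s i j)
        = fun s => ∫ t in (0:ℝ)..s, ((Φ l t)⁻¹ * Q₁ t * Φ l t) i j := by
      funext s; rw [hB]; rfl
    rw [hfun]
    exact intervalIntegral.integral_hasDerivAt_right (hc.intervalIntegrable _ _)
      (hc.stronglyMeasurableAtFilter _ _) hc.continuousAt
  have hBscont : ∀ l (i j : Fin 2), Continuous fun s => B l s i j := fun l i j =>
    continuous_iff_continuousAt.mpr fun x => (hBs l x i j).continuousAt
  have hB0 : ∀ l, B l 0 = 0 := by
    intro l; rw [hB]; ext i j; simp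
  intro l x i j
  set G' : ℝ → ℝ → ℂ := fun l' s =>
    (((Φ l' s)⁻¹ * Q₁ s * Φ l' s) * γ l' s - γ l' s * ((Φ l' s)⁻¹ * Q₁ s * Φ l' s)) i j
    with hG'
  have hG'cont : Continuous fun p : ℝ × ℝ => G' p.1 p.2 := by
    simp only [hG', Matrix.sub_apply]
    exact (cont_entry_mul (A := fun p : ℝ × ℝ => (Φ p.1 p.2)⁻¹ * Q₁ p.2 * Φ p.1 p.2)
        (B := fun p : ℝ × ℝ => γ p.1 p.2) hFcont hγcont i j).sub
      (cont_entry_mul hγcont hFcont i j)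
  obtain ⟨C, hC⟩ := (isCompact_Icc.prod isCompact_uIcc :
      IsCompact (Set.Icc (l - 1) (l + 1) ×ˢ Set.uIcc (0:ℝ) x)).exists_bound_of_continuousOn
    hG'cont.continuousOn
  have hmeas : ∀ᶠ l' in nhds l, MeasureTheory.AEStronglyMeasurable
      (fun s => ((Φ l' s)⁻¹ * Q₁ s * Φ l' s) i j)
      (MeasureTheory.volume.restrict (Set.uIoc (0:ℝ) x)) :=
    Filter.Eventually.of_forall fun l' =>
      (cont_slice (hFcont i j) l').aestronglyMeasurable
  have hint : IntervalIntegrable (fun s => ((Φ l s)⁻¹ * Q₁ s * Φ l s) i j)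
      MeasureTheory.volume 0 x :=
    (cont_slice (hFcont i j) l).intervalIntegrable _ _
  have hmeas' : MeasureTheory.AEStronglyMeasurable (G' l)
      (MeasureTheory.volume.restrict (Set.uIoc (0:ℝ) x)) :=
    (cont_slice hG'cont l).aestronglyMeasurable
  have hbound : ∀ᵐ s ∂MeasureTheory.volume, s ∈ Set.uIoc (0:ℝ) x →
      ∀ l' ∈ Metric.ball l 1, ‖G' l' s‖ ≤ C := by
    refine Filter.Eventually.of_forall fun s hs l' hl' => ?_
    have habs := abs_lt.mp (by simpa [Real.dist_eq] using hl')
    exact hC (l', s) ⟨Set.mem_Icc.mpr ⟨by linarith [habs.1], by linarith [habs.2]⟩,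
      Set.uIoc_subset_uIcc hs⟩
  have hbint : IntervalIntegrable (fun _ : ℝ => C) MeasureTheory.volume 0 x :=
    intervalIntegrable_const
  have hdiff : ∀ᵐ s ∂MeasureTheory.volume, s ∈ Set.uIoc (0:ℝ) x →
      ∀ l' ∈ Metric.ball l 1,
        HasDerivAt (fun u => ((Φ u s)⁻¹ * Q₁ s * Φ u s) i j) (G' l' s) l' :=
    Filter.Eventually.of_forall fun s _ l' _ => hFl l' s i j
  have hmain : HasDerivAt (fun l' => ∫ s in (0:ℝ)..x, ((Φ l' s)⁻¹ * Q₁ s * Φ l' s) i j)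
      (∫ s in (0:ℝ)..x, G' l s) l :=
    (intervalIntegral.hasDerivAt_integral_of_dominated_loc_of_deriv_le
      (Metric.ball_mem_nhds l one_pos) hmeas hint hmeas' hbound hbint hdiff).2
  -- integration by parts
  have hGded : ∀ s : ℝ, HasDerivAt (fun s' => (B l s' * γ l s' - γ l s' * B l s') i j)
      (G' l s + (B l s * Tm l s - Tm l s * B l s) i j) s := by
    intro s
    have h1 := entry_mul_deriv (A := fun s' => B l s') (B := fun s' => γ l s')
      (fun i j => hBs l s i j) (fun i j => hT l s i j) i j
    have h2 := entry_mul_deriv (A := fun s' => γ l s') (B := fun s' => B l s')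
      (fun i j => hT l s i j) (fun i j => hBs l s i j) i j
    have h3 := h1.fun_sub h2
    have hf : (fun s' => (B l s' * γ l s') i j - (γ l s' * B l s') i j)
        = fun s' => (B l s' * γ l s' - γ l s' * B l s') i j := by
      funext s'; simp [Matrix.sub_apply]
    rw [hf] at h3
    convert h3 using 1
    · rfl
    simp only [hG', Matrix.sub_apply, Matrix.add_apply]
    ring
  have hcont1 : Continuous fun s => G' l s := cont_slice hG'cont l
  have hcont2 : Continuous fun s => (B l s * Tm l s - Tm l s * B l s) i j := by
    simp only [Matrix.sub_apply]
    exact (cont_entry_mul (A := fun s => B l s) (B := fun s => Tm l s) (hBscont l)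
        (fun i j => cont_slice (hTcont i j) l) i j).sub
      (cont_entry_mul (fun i j => cont_slice (hTcont i j) l) (hBscont l) i j)
  have hibp := intervalIntegral.integral_eq_sub_of_hasDerivAt (a := (0:ℝ)) (b := x)
    (f := fun s' => (B l s' * γ l s' - γ l s' * B l s') i j)
    (f' := fun s => G' l s + (B l s * Tm l s - Tm l s * B l s) i j)
    (fun s _ => hGded s) ((hcont1.add hcont2).intervalIntegrable _ _)
  rw [intervalIntegral.integral_add (hcont1.intervalIntegrable _ _)
    (hcont2.intervalIntegrable _ _)] at hibp
  have h0 : (B l 0 * γ l 0 - γ l 0 * B l 0) i j = 0 := by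
    rw [hB0 l]; simp
  simp only [h0, sub_zero, Matrix.sub_apply] at hibp
  have hfun : (fun l' => B l' x i j)
      = fun l' => ∫ s in (0:ℝ)..x, ((Φ l' s)⁻¹ * Q₁ s * Φ l' s) i j := by
    funext l'; rw [hB]; rfl
  rw [hfun]
  have hvaleq : (∫ s in (0:ℝ)..x, G' l s)
      = ((B l x * γ l x - γ l x * B l x
          - Matrix.of fun i' j' =>
              ∫ s in (0:ℝ)..x, (B l s * Tm l s - Tm l s * B l s) i' j') i j) := by
    simp only [Matrix.sub_apply, Matrix.of_apply]
    linear_combination hibp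
  rw [← hvaleq]
  exact hmain
end
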